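/- arXiv:2403.19341 — 2 statements merged into one kernel-verified Lean document; each statement's English description precedes it below -/
import Mathlib

section
/- (Exponential Giraud's Lemma, variant with mismatched exponential rates.) Fix reals p ≥ 0 and ρ > −n with 2p − ρ ≤ 0, fix ε ∈ (0,1) and 0 < τ < R. Then there exist α₀ ≥ 1 and C > 0 (depending only on the data above and on (M,d,μ), not on α, X, Y) such that for every α ≥ α₀ the following holds. Let X, Y : M×M → ℝ be continuous off the diagonal, with X(x,·) supported in B(x,τ) for every x, and satisfying for all x ≠ y: |X(x,y)| ≤ 1 if √α·d(x,y) ≤ 1, and |X(x,y)| ≤ α^{p}·d(x,y)^{ρ}·e^{−√α·d(x,y)} if √α·d(x,y) ≥ 1; |Y(x,y)| ≤ 1 if √α·d(x,y) ≤ 1, |Y(x,y)| ≤ e^{−(1−ε)·√α·d(x,y)} if √α·d(x,y) ≥ 1 and d(x,y) ≤ R, and |Y(x,y)| ≤ e^{−(1−ε)·√α·R} if d(x,y) ≥ R. Then Z(x,y) := ∫_M X(x,z)·Y(z,y) dμ(z) satisfies, for all x, y ∈ M: |Z(x,y)| ≤ C·α^{−n/2} if √α·d(x,y) ≤ 1;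 |Z(x,y)| ≤ C·α^{−n/2}·e^{−(1−ε)·√α·d(x,y)} if √α·d(x,y) ≥ 1 and d(x,y) ≤ R; and |Z(x,y)| ≤ C·α^{−n/2}·e^{−(1−ε)·√α·R} if d(x,y) ≥ R. -/
open MeasureTheory Real
noncomputable section

/-!
Take `c = ε / 2`. Dominating `exp (-c s d(x,z))` by `∑ₖ exp(-c)^k · 1_{B(x, (k+1)/s)}(z)` and using
`μ B(x,r) ≤ A rⁿ` gives `∫ exp (-c s d(x,z)) dμ(z) ≲ s⁻ⁿ`. Since `2p ≤ ρ`, the prefactor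
`α^p d^ρ = α^(p-ρ/2) (√α d)^ρ` of `X` is at most `(√α d)^ρ`, which the spare decay `exp (-c √α d)`
absorbs, so `|X(x,z)| ≲ exp (-(1-c) √α d(x,z))`; also `|Y(z,y)| ≲ exp (-(1-ε) √α min(d(z,y), R))`.
As `min(d(x,y), R) ≤ d(x,z) + min(d(z,y), R)`, the integrand of `Z(x,y)` is
`≲ exp (-(1-ε) √α min(d(x,y), R)) · exp (-c √α d(x,z))`, so integrating with `s = √α` yields
`|Z(x,y)| ≲ α^(-n/2) exp (-(1-ε) √α min(d(x,y), R))`, which contains the three bounds.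
-/

open scoped Nat

theorem summable_add_one_pow_mul_geometric (n : ℕ) {q : ℝ} (hq₀ : q ≠ 0) (hq : ‖q‖ < 1) :
    Summable fun k : ℕ => ((k : ℝ) + 1) ^ n * q ^ k := by
  have hshift := (summable_nat_add_iff (f := fun k : ℕ => (k : ℝ) ^ n * q ^ k) 1).2
    (summable_pow_mul_geometric_of_norm_lt_one n hq)
  refine (hshift.mul_left q⁻¹).congr fun k => ?_
  simp only [Nat.cast_add, Nat.cast_one, pow_succ]
  field_simp

theorem ofReal_exp_neg_le_tsum_indicator_ball {M : Type*} [PseudoMetricSpace M] {c s : ℝ}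
    (hc : 0 ≤ c) (hs : 0 < s) (x z : M) :
    ENNReal.ofReal (exp (-c * (s * dist x z))) ≤ ∑' k : ℕ,
      (Metric.ball x ((k + 1) / s)).indicator (fun _ => ENNReal.ofReal (exp (-c) ^ k)) z := by
  set t := s * dist x z
  have ht : 0 ≤ t := by positivity
  refine le_trans ?_ (ENNReal.le_tsum ⌊t⌋₊)
  have hz : z ∈ Metric.ball x ((⌊t⌋₊ + 1) / s) := by
    rw [Metric.mem_ball, dist_comm, lt_div_iff₀ hs, mul_comm]
    exact Nat.lt_floor_add_one t
  rw [Set.indicator_of_mem hz, ← exp_nat_mul]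
  exact ENNReal.ofReal_le_ofReal (exp_le_exp.2 (by nlinarith [Nat.floor_le ht]))

section VolumeGrowth

variable {M : Type*} [PseudoMetricSpace M] [MeasurableSpace M] {μ : Measure M} {n : ℕ} {A : ℝ}

theorem nullSingletonClass_of_measure_ball_le (hn : 1 ≤ n)
    (hvol : ∀ (x : M) (r : ℝ), 0 < r → μ (Metric.ball x r) ≤ ENNReal.ofReal (A * r ^ n)) :
    NullSingletonClass μ := by
  have hcont : Continuous fun r : ℝ => ENNReal.ofReal (A * r ^ n) :=
    ENNReal.continuous_ofReal.comp (by fun_prop)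
  have hlim : Filter.Tendsto (fun r : ℝ => ENNReal.ofReal (A * r ^ n))
      (nhdsWithin 0 (Set.Ioi 0)) (nhds 0) :=
    (hcont.tendsto' 0 0 (by simp [zero_pow (by omega : n ≠ 0)])).mono_left nhdsWithin_le_nhds
  refine ⟨fun x => le_antisymm (ge_of_tendsto hlim ?_) zero_le⟩
  exact eventually_nhdsWithin_of_forall fun r hr =>
    (measure_mono (Set.singleton_subset_iff.2 (Metric.mem_ball_self hr))).trans (hvol x r hr)

theorem exists_lintegral_exp_neg_dist_le [OpensMeasurableSpace M] (hA : 0 < A)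
    (hvol : ∀ (x : M) (r : ℝ), 0 < r → μ (Metric.ball x r) ≤ ENNReal.ofReal (A * r ^ n))
    {c : ℝ} (hc : 0 < c) :
    ∃ C > 0, ∀ s > 0, ∀ x : M,
      ∫⁻ z, ENNReal.ofReal (exp (-c * (s * dist x z))) ∂μ ≤ ENNReal.ofReal (C / s ^ n) := by
  set q := exp (-c)
  have hsum : Summable fun k : ℕ => ((k : ℝ) + 1) ^ n * q ^ k :=
    summable_add_one_pow_mul_geometric n (exp_pos _).ne'
      (by rw [norm_of_nonneg (exp_nonneg _), exp_lt_one_iff]; linarith)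
  refine ⟨A * ∑' k : ℕ, ((k : ℝ) + 1) ^ n * q ^ k,
    mul_pos hA (hsum.tsum_pos (fun _ => by positivity) 0 (by simp)), fun s hs x => ?_⟩
  calc ∫⁻ z, ENNReal.ofReal (exp (-c * (s * dist x z))) ∂μ
      ≤ ∫⁻ z, ∑' k : ℕ, (Metric.ball x ((k + 1) / s)).indicator
          (fun _ => ENNReal.ofReal (q ^ k)) z ∂μ :=
        lintegral_mono (ofReal_exp_neg_le_tsum_indicator_ball hc.le hs x)
    _ = ∑' k : ℕ, ENNReal.ofReal (q ^ k) * μ (Metric.ball x ((k + 1) / s)) := by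
        rw [lintegral_tsum fun k => (measurable_const.indicator
          Metric.isOpen_ball.measurableSet).aemeasurable]
        simp only [lintegral_indicator_const Metric.isOpen_ball.measurableSet]
    _ ≤ ∑' k : ℕ, ENNReal.ofReal (A / s ^ n * (((k : ℝ) + 1) ^ n * q ^ k)) := by
        refine ENNReal.tsum_le_tsum fun k => ?_
        calc ENNReal.ofReal (q ^ k) * μ (Metric.ball x ((k + 1) / s))
            ≤ ENNReal.ofReal (q ^ k) * ENNReal.ofReal (A * ((k + 1) / s) ^ n) := by
              gcongr
              exact hvol x _ (by positivity)
          _ = ENNReal.ofReal (A / s ^ n * (((k : ℝ) + 1) ^ n * q ^ k)) := by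
              rw [← ENNReal.ofReal_mul (by positivity)]
              congr 1
              rw [div_pow]
              field_simp
    _ = ENNReal.ofReal ((A * ∑' k : ℕ, ((k : ℝ) + 1) ^ n * q ^ k) / s ^ n) := by
        rw [← ENNReal.ofReal_tsum_of_nonneg (fun _ => by positivity) (hsum.mul_left _),
          tsum_mul_left]
        ring_nf

end VolumeGrowth

theorem abs_integral_le_of_ae_abs_le_mul {α : Type*} [MeasurableSpace α] {μ : Measure α}
    {f g : α → ℝ} {B C : ℝ} (hB : 0 ≤ B) (hC : 0 ≤ C)
    (hg : ∫⁻ z, ENNReal.ofReal (g z) ∂μ ≤ ENNReal.ofReal C) (hf : ∀ᵐ z ∂μ, |f z| ≤ B * g z) :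
    |∫ z, f z ∂μ| ≤ B * C := by
  refine (norm_integral_le_lintegral_norm f).trans
    (ENNReal.toReal_le_of_le_ofReal (by positivity) ?_)
  calc ∫⁻ z, ENNReal.ofReal ‖f z‖ ∂μ
      ≤ ∫⁻ z, ENNReal.ofReal B * ENNReal.ofReal (g z) ∂μ :=
        lintegral_mono_ae <| hf.mono fun z hz => by
          rw [← ENNReal.ofReal_mul hB]
          exact ENNReal.ofReal_le_ofReal hz
    _ = ENNReal.ofReal B * ∫⁻ z, ENNReal.ofReal (g z) ∂μ :=
        lintegral_const_mul' _ _ ENNReal.ofReal_ne_top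
    _ ≤ ENNReal.ofReal (B * C) := by
        rw [ENNReal.ofReal_mul hB]
        gcongr

theorem inv_sqrt_pow_eq_rpow {α : ℝ} (hα : 0 ≤ α) (n : ℕ) :
    (√α ^ n)⁻¹ = α ^ (-(n : ℝ) / 2) := by
  rw [sqrt_eq_rpow, ← rpow_natCast, ← rpow_mul hα, ← rpow_neg hα]
  ring_nf

theorem abs_le_exp_one_add_mul_exp_neg {v a t K : ℝ} (ha : a ≤ 1) (ht : 0 ≤ t) (hK : 0 ≤ K)
    (hnear : t ≤ 1 → |v| ≤ 1) (hfar : 1 ≤ t → |v| ≤ K * exp (-a * t)) :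
    |v| ≤ (exp 1 + K) * exp (-a * t) := by
  have hE := exp_pos (-a * t)
  rcases le_total t 1 with h | h
  · have : 1 ≤ exp 1 * exp (-a * t) := by
      rw [← exp_add]
      exact one_le_exp (by nlinarith)
    nlinarith [hnear h]
  · nlinarith [hfar h, exp_pos 1]

theorem rpow_mul_exp_neg_le {ρ c t : ℝ} (hc : 0 < c) (ht : 1 ≤ t) :
    t ^ ρ * exp (-t) ≤ ⌈ρ⌉₊ ! / c ^ ⌈ρ⌉₊ * exp (-(1 - c) * t) := by
  set m := ⌈ρ⌉₊
  have hpow : t ^ ρ ≤ m ! / c ^ m * exp (c * t) := calc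
    t ^ ρ ≤ t ^ (m : ℝ) := rpow_le_rpow_of_exponent_le ht (Nat.le_ceil ρ)
    _ = (c * t) ^ m / m ! * (m ! / c ^ m) := by
        rw [rpow_natCast, mul_pow]
        field_simp
    _ ≤ exp (c * t) * (m ! / c ^ m) := by
        gcongr
        exact pow_div_factorial_le_exp _ (by positivity) m
    _ = m ! / c ^ m * exp (c * t) := mul_comm _ _
  calc t ^ ρ * exp (-t) ≤ m ! / c ^ m * exp (c * t) * exp (-t) := by gcongr
    _ = m ! / c ^ m * exp (-(1 - c) * t) := by
        rw [mul_assoc, ← exp_add]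
        ring_nf

theorem abs_le_mul_exp_neg_of_le_rpow_mul_exp_neg {α p ρ c d v : ℝ} (hα : 1 ≤ α)
    (hpρ : 2 * p - ρ ≤ 0) (hc : 0 < c) (hd : 0 ≤ d)
    (hnear : √α * d ≤ 1 → |v| ≤ 1)
    (hfar : 1 ≤ √α * d → |v| ≤ α ^ p * d ^ ρ * exp (-(√α * d))) :
    |v| ≤ (exp 1 + ⌈ρ⌉₊ ! / c ^ ⌈ρ⌉₊) * exp (-(1 - c) * (√α * d)) := by
  refine abs_le_exp_one_add_mul_exp_neg (by linarith) (by positivity) (by positivity) hnear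
    fun h => (hfar h).trans ?_
  have hprefactor : α ^ p * d ^ ρ ≤ (√α * d) ^ ρ := by
    rw [mul_rpow (sqrt_nonneg α) hd, sqrt_eq_rpow, ← rpow_mul (by linarith)]
    gcongr
    all_goals linarith
  calc α ^ p * d ^ ρ * exp (-(√α * d)) ≤ (√α * d) ^ ρ * exp (-(√α * d)) := by gcongr
    _ ≤ _ := rpow_mul_exp_neg_le hc h

theorem abs_le_mul_exp_neg_min {α ε R d v : ℝ} (hε : 0 ≤ ε) (hd : 0 ≤ d)
    (hnear : √α * d ≤ 1 → |v| ≤ 1)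
    (hmid : 1 ≤ √α * d → d ≤ R → |v| ≤ exp (-(1 - ε) * (√α * d)))
    (hfar : R ≤ d → |v| ≤ exp (-(1 - ε) * (√α * R))) :
    |v| ≤ (exp 1 + 1) * exp (-(1 - ε) * (√α * min d R)) := by
  rcases le_total R d with h | h
  · rw [min_eq_right h]
    exact (hfar h).trans (le_mul_of_one_le_left (exp_pos _).le (by linarith [exp_pos 1]))
  · rw [min_eq_left h]
    exact abs_le_exp_one_add_mul_exp_neg (by linarith) (by positivity) zero_le_one hnear
      fun h' => (hmid h' h).trans_eq (one_mul _).symm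

theorem min_dist_le_dist_add_min {M : Type*} [PseudoMetricSpace M] (x y z : M) (R : ℝ) :
    min (dist x y) R ≤ dist x z + min (dist z y) R := by
  rcases le_total (dist z y) R with h | h
  · rw [min_eq_left h]
    exact (min_le_left _ _).trans (dist_triangle x z y)
  · rw [min_eq_right h]
    exact (min_le_right _ _).trans (le_add_of_nonneg_left dist_nonneg)

theorem abs_mul_le_exp_neg_min_mul_exp_neg_dist {M : Type*} [PseudoMetricSpace M]
    {X Y : M → M → ℝ} {α p ρ ε R : ℝ} (hα : 1 ≤ α) (hpρ : 2 * p - ρ ≤ 0)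
    (hε₀ : 0 < ε) (hε₁ : ε ≤ 1)
    (hX1 : ∀ x y : M, x ≠ y → √α * dist x y ≤ 1 → |X x y| ≤ 1)
    (hX2 : ∀ x y : M, 1 ≤ √α * dist x y →
      |X x y| ≤ α ^ p * dist x y ^ ρ * exp (-(√α * dist x y)))
    (hY1 : ∀ x y : M, x ≠ y → √α * dist x y ≤ 1 → |Y x y| ≤ 1)
    (hY2 : ∀ x y : M, 1 ≤ √α * dist x y → dist x y ≤ R →
      |Y x y| ≤ exp (-(1 - ε) * (√α * dist x y)))
    (hY3 : ∀ x y : M, R ≤ dist x y → |Y x y| ≤ exp (-(1 - ε) * (√α * R)))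
    {x y z : M} (hzx : z ≠ x) (hzy : z ≠ y) :
    |X x z * Y z y| ≤ (exp 1 + ⌈ρ⌉₊ ! / (ε / 2) ^ ⌈ρ⌉₊) * (exp 1 + 1) *
      exp (-(1 - ε) * (√α * min (dist x y) R)) * exp (-(ε / 2) * (√α * dist x z)) := by
  have hX := abs_le_mul_exp_neg_of_le_rpow_mul_exp_neg hα hpρ (half_pos hε₀) dist_nonneg
    (hX1 x z hzx.symm) (hX2 x z)
  have hY := abs_le_mul_exp_neg_min hε₀.le dist_nonneg (hY1 z y hzy) (hY2 z y) (hY3 z y)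
  have hexp : exp (-(1 - ε / 2) * (√α * dist x z)) * exp (-(1 - ε) * (√α * min (dist z y) R)) ≤
      exp (-(1 - ε) * (√α * min (dist x y) R)) * exp (-(ε / 2) * (√α * dist x z)) := by
    rw [← exp_add, ← exp_add, exp_le_exp]
    have htri := mul_le_mul_of_nonneg_left (min_dist_le_dist_add_min x y z R) (sqrt_nonneg α)
    nlinarith
  rw [abs_mul]
  calc |X x z| * |Y z y|
      ≤ (exp 1 + ⌈ρ⌉₊ ! / (ε / 2) ^ ⌈ρ⌉₊) * exp (-(1 - ε / 2) * (√α * dist x z)) *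
        ((exp 1 + 1) * exp (-(1 - ε) * (√α * min (dist z y) R))) :=
        mul_le_mul hX hY (abs_nonneg _) (by positivity)
    _ = (exp 1 + ⌈ρ⌉₊ ! / (ε / 2) ^ ⌈ρ⌉₊) * (exp 1 + 1) *
        (exp (-(1 - ε / 2) * (√α * dist x z)) *
          exp (-(1 - ε) * (√α * min (dist z y) R))) := by ring
    _ ≤ _ := by
        rw [mul_assoc _ (exp _)]
        gcongr

theorem statement12_general (M : Type*) [MetricSpace M]
    [MeasurableSpace M] [BorelSpace M] (μ : Measure M)
    (n : ℕ) (hn : 1 ≤ n) (A : ℝ) (hA : 0 < A)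
    (hvol : ∀ (x : M) (r : ℝ), 0 < r → μ (Metric.ball x r) ≤ ENNReal.ofReal (A * r ^ n))
    (p ρ : ℝ) (hpρ : 2 * p - ρ ≤ 0)
    (ε : ℝ) (hε : ε ∈ Set.Ioo (0 : ℝ) 1) (τ R : ℝ) (hτ : 0 < τ) (hτR : τ < R) :
    ∃ α₀ ≥ (1 : ℝ), ∃ C > 0, ∀ α : ℝ, α₀ ≤ α →
      ∀ X Y : M → M → ℝ,
        ContinuousOn (fun pr : M × M => X pr.1 pr.2) {pr : M × M | pr.1 ≠ pr.2} →
        ContinuousOn (fun pr : M × M => Y pr.1 pr.2) {pr : M × M | pr.1 ≠ pr.2} →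
        (∀ x z : M, τ ≤ dist x z → X x z = 0) →
        (∀ x y : M, x ≠ y → Real.sqrt α * dist x y ≤ 1 → |X x y| ≤ 1) →
        (∀ x y : M, 1 ≤ Real.sqrt α * dist x y →
          |X x y| ≤ α ^ p * dist x y ^ ρ * Real.exp (-(Real.sqrt α * dist x y))) →
        (∀ x y : M, x ≠ y → Real.sqrt α * dist x y ≤ 1 → |Y x y| ≤ 1) →
        (∀ x y : M, 1 ≤ Real.sqrt α * dist x y → dist x y ≤ R →
          |Y x y| ≤ Real.exp (-(1 - ε) * (Real.sqrt α * dist x y))) →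
        (∀ x y : M, R ≤ dist x y → |Y x y| ≤ Real.exp (-(1 - ε) * (Real.sqrt α * R))) →
        ∀ x y : M,
          (Real.sqrt α * dist x y ≤ 1 →
            |∫ z, X x z * Y z y ∂μ| ≤ C * α ^ (-(n : ℝ) / 2)) ∧
          (1 ≤ Real.sqrt α * dist x y → dist x y ≤ R →
            |∫ z, X x z * Y z y ∂μ| ≤
              C * α ^ (-(n : ℝ) / 2) * Real.exp (-(1 - ε) * (Real.sqrt α * dist x y))) ∧
          (R ≤ dist x y →
            |∫ z, X x z * Y z y ∂μ| ≤
              C * α ^ (-(n : ℝ) / 2) * Real.exp (-(1 - ε) * (Real.sqrt α * R))) := by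
  obtain ⟨hε₀, hε₁⟩ := hε
  obtain ⟨C₀, hC₀, hint⟩ := exists_lintegral_exp_neg_dist_le hA hvol (half_pos hε₀)
  have := nullSingletonClass_of_measure_ball_le hn hvol
  set K := (exp 1 + ⌈ρ⌉₊ ! / (ε / 2) ^ ⌈ρ⌉₊) * (exp 1 + 1)
  refine ⟨1, le_rfl, K * C₀, by positivity,
    fun α hα X Y _ _ _ hX1 hX2 hY1 hY2 hY3 x y => ?_⟩
  have hs : 0 < √α := sqrt_pos.2 (by linarith)
  have hZ : |∫ z, X x z * Y z y ∂μ| ≤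
      K * C₀ * α ^ (-(n : ℝ) / 2) * exp (-(1 - ε) * (√α * min (dist x y) R)) := calc
    _ ≤ K * exp (-(1 - ε) * (√α * min (dist x y) R)) * (C₀ / √α ^ n) :=
        abs_integral_le_of_ae_abs_le_mul (by positivity) (by positivity) (hint _ hs x)
          (((μ.ae_ne x).and (μ.ae_ne y)).mono fun z hz =>
            abs_mul_le_exp_neg_min_mul_exp_neg_dist hα hpρ hε₀ hε₁.le hX1 hX2 hY1 hY2 hY3
              hz.1 hz.2)
    _ = _ := by
        rw [div_eq_mul_inv, inv_sqrt_pow_eq_rpow (by linarith)]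
        ring
  refine ⟨fun _ => hZ.trans (mul_le_of_le_one_right (by positivity) (exp_le_one_iff.2 ?_)),
    fun _ h => by rwa [min_eq_left h] at hZ, fun h => by rwa [min_eq_right h] at hZ⟩
  have hmin : 0 ≤ √α * min (dist x y) R := mul_nonneg hs.le (le_min dist_nonneg (by linarith))
  nlinarith

/-- exponential Giraud's Lemma, variant with mismatched exponential rates. -/
theorem statement12 (M : Type*) [MetricSpace M] [CompactSpace M]
    [MeasurableSpace M] [BorelSpace M] (μ : Measure M)
    (n : ℕ) (hn : 1 ≤ n) (A : ℝ) (hA : 0 < A)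
    (hvol : ∀ (x : M) (r : ℝ), 0 < r → μ (Metric.ball x r) ≤ ENNReal.ofReal (A * r ^ n))
    (p ρ : ℝ) (hp : 0 ≤ p) (hρ : -(n : ℝ) < ρ) (hpρ : 2 * p - ρ ≤ 0)
    (ε : ℝ) (hε : ε ∈ Set.Ioo (0 : ℝ) 1) (τ R : ℝ) (hτ : 0 < τ) (hτR : τ < R) :
    ∃ α₀ ≥ (1 : ℝ), ∃ C > 0, ∀ α : ℝ, α₀ ≤ α →
      ∀ X Y : M → M → ℝ,
        ContinuousOn (fun pr : M × M => X pr.1 pr.2) {pr : M × M | pr.1 ≠ pr.2} →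
        ContinuousOn (fun pr : M × M => Y pr.1 pr.2) {pr : M × M | pr.1 ≠ pr.2} →
        (∀ x z : M, τ ≤ dist x z → X x z = 0) →
        (∀ x y : M, x ≠ y → Real.sqrt α * dist x y ≤ 1 → |X x y| ≤ 1) →
        (∀ x y : M, 1 ≤ Real.sqrt α * dist x y →
          |X x y| ≤ α ^ p * dist x y ^ ρ * Real.exp (-(Real.sqrt α * dist x y))) →
        (∀ x y : M, x ≠ y → Real.sqrt α * dist x y ≤ 1 → |Y x y| ≤ 1) →
        (∀ x y : M, 1 ≤ Real.sqrt α * dist x y → dist x y ≤ R →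
          |Y x y| ≤ Real.exp (-(1 - ε) * (Real.sqrt α * dist x y))) →
        (∀ x y : M, R ≤ dist x y → |Y x y| ≤ Real.exp (-(1 - ε) * (Real.sqrt α * R))) →
        ∀ x y : M,
          (Real.sqrt α * dist x y ≤ 1 →
            |∫ z, X x z * Y z y ∂μ| ≤ C * α ^ (-(n : ℝ) / 2)) ∧
          (1 ≤ Real.sqrt α * dist x y → dist x y ≤ R →
            |∫ z, X x z * Y z y ∂μ| ≤
              C * α ^ (-(n : ℝ) / 2) * Real.exp (-(1 - ε) * (Real.sqrt α * dist x y))) ∧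
          (R ≤ dist x y →
            |∫ z, X x z * Y z y ∂μ| ≤
              C * α ^ (-(n : ℝ) / 2) * Real.exp (-(1 - ε) * (Real.sqrt α * R))) :=
  statement12_general M μ n hn A hA hvol p ρ hpρ ε hε τ R hτ hτR
end
end

section
/- (Liouville-type vanishing.) Fix integers k ≥ 1 and n > 2k. Let f ∈ C^{2k}(ℝⁿ) satisfy (Δ+1)^k f = 0 pointwise on ℝⁿ, and suppose that for every p ≥ 1 there is C_p > 0 such that |∇^l f(y)| ≤ C_p·(1+|y|)^{−p} for all y ∈ ℝⁿ and all l = 0,…,2k. Then f ≡ 0 on ℝⁿ. -/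
open MeasureTheory Real
noncomputable section

/-- ℝⁿ as `EuclideanSpace ℝ (Fin n)`. -/
abbrev Euc (n : ℕ) := EuclideanSpace ℝ (Fin n)

/-- The non-negative Euclidean Laplacian `Δf = -∑ ∂²f/∂x_i²`. -/
def lap (n : ℕ) (f : Euc n → ℝ) (x : Euc n) : ℝ :=
  -∑ i : Fin n,
    iteratedFDeriv ℝ 2 f x ![EuclideanSpace.single i (1 : ℝ), EuclideanSpace.single i (1 : ℝ)]

/-- The k-fold composition of `f ↦ Δf + αf`. -/
def lapPow (n : ℕ) (α : ℝ) (k : ℕ) : (Euc n → ℝ) → Euc n → ℝ :=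
  (fun f x => lap n f x + α * f x)^[k]

/-- `G` is a fundamental solution of `(Δ+α)^k` in ℝⁿ. -/
def IsFundSol (n k : ℕ) (α : ℝ) (G : Euc n → Euc n → ℝ) : Prop :=
  (∀ x, LocallyIntegrable (G x) volume) ∧
  ∀ φ : Euc n → ℝ, ContDiff ℝ (⊤ : ℕ∞) φ → HasCompactSupport φ →
    ∀ x, ∫ y, G x y * lapPow n α k φ y = φ x

/-- The modified Bessel function of the second kind `K_ν(r)`. -/
def besselK (ν r : ℝ) : ℝ :=
  ∫ t in Set.Ioi (0 : ℝ), Real.exp (-r * Real.cosh t) * Real.cosh (ν * t)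

/-- `G₁(x,y) = (2π)^{-n/2} |x-y|^{-(n-2)/2} K_{(n-2)/2}(|x-y|)`. -/
def G1 (n : ℕ) (x y : Euc n) : ℝ :=
  (2 * π) ^ (-(n : ℝ) / 2) * ‖x - y‖ ^ (-((n : ℝ) - 2) / 2) *
    besselK (((n : ℝ) - 2) / 2) ‖x - y‖

/-- The iterated convolutions `G₁^{(j)}`. -/
def G1iter (n : ℕ) : ℕ → Euc n → Euc n → ℝ
  | 0, _, _ => 0
  | 1, x, y => G1 n x y
  | j + 2, x, y => ∫ z, G1iter n (j + 1) x z * G1 n z y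

/-- `G_α^{(k)}(x,y) = α^{(n-2k)/2} G₁^{(k)}(√α x, √α y)`. -/
def Gak (n k : ℕ) (α : ℝ) (x y : Euc n) : ℝ :=
  α ^ (((n : ℝ) - 2 * k) / 2) * G1iter n k (Real.sqrt α • x) (Real.sqrt α • y)

/-- The class 𝔥ₖ. -/
def MemHk (n k : ℕ) (u : Euc n → Euc n → ℝ) : Prop :=
  ContDiffOn ℝ (2 * k : ℕ) (fun p : Euc n × Euc n => u p.1 p.2)
    {p : Euc n × Euc n | p.1 ≠ p.2} ∧
  (∃ C > 0, ∀ x y : Euc n, x ≠ y → ‖x - y‖ ≤ 1 →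
    |u x y| ≤ C * ‖x - y‖ ^ (2 * (k : ℝ) - n)) ∧
  ∀ p : ℝ, 1 ≤ p → ∃ C > 0, ∀ l ≤ 2 * k, ∀ x y : Euc n, 1 ≤ ‖x - y‖ →
    ‖iteratedFDeriv ℝ l (u x) y‖ ≤ C * ‖x - y‖ ^ (-p)

/-- The constant `c_{n,k}`. -/
def cnk (n k : ℕ) : ℝ :=
  Real.Gamma (((n : ℝ) - 2 * k) / 2) / (4 ^ k * π ^ ((n : ℝ) / 2) * (Nat.factorial (k - 1)))

/-- The modulus `η`. -/
def eta (n k : ℕ) (t : ℝ) : ℝ :=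
  if n = 2 * k + 1 then t
  else if n = 2 * k + 2 then t ^ 2 * (1 + |Real.log t|)
  else t ^ 2

/-!
At a global maximum `x` of a `C²` function `g` every second directional derivative is `≤ 0`, so
`Δg(x) ≥ 0` for the non-negative Laplacian. Hence if `(Δ + α) g = 0` with `α > 0` and `g → 0` at
infinity, a positive value of `g` would produce a global maximum where `Δg + αg > 0`; so `g ≤ 0`,
and likewise `-g ≤ 0`. Writing `(Δ + α)^(k+1) f = (Δ + α)^k ((Δ + α) f)`, the function
`(Δ + α) f` is again `C^{2k}` with all derivatives up to order `2k` vanishing at infinity, so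
induction on `k` gives `(Δ + α) f = 0` and then `f = 0`.
-/

open Filter Topology

theorem IsLocalMax.deriv_deriv_nonpos {φ : ℝ → ℝ} {t₀ : ℝ} (h : IsLocalMax φ t₀)
    (hc : ContinuousAt φ t₀) : deriv (deriv φ) t₀ ≤ 0 := by
  by_contra! hpos
  have hmin : IsLocalMin φ t₀ := isLocalMin_of_deriv_deriv_pos hpos h.deriv_eq_zero hc
  have hconst : φ =ᶠ[𝓝 t₀] fun _ => φ t₀ := by
    filter_upwards [h, hmin] with t hle hge using le_antisymm hle hge
  have hderiv : deriv φ =ᶠ[𝓝 t₀] fun _ => 0 := by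
    filter_upwards [hconst.eventuallyEq_nhds] with t ht
    rw [ht.deriv_eq, deriv_const]
  rw [hderiv.deriv_eq, deriv_const] at hpos
  exact hpos.false

theorem IsLocalMax.fderiv_fderiv_apply_self_nonpos {E : Type*} [NormedAddCommGroup E]
    [NormedSpace ℝ E] {g : E → ℝ} {x : E} (h : IsLocalMax g x) (hg : ContDiff ℝ 2 g) (v : E) :
    fderiv ℝ (fderiv ℝ g) x v v ≤ 0 := by
  set line : ℝ → E := fun t => x + t • v
  have hline : ∀ t, HasDerivAt line v t := fun t =>
    one_smul ℝ v ▸ ((hasDerivAt_id t).smul_const v).const_add x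
  have hline0 : line 0 = x := by simp [line]
  have hderiv : deriv (g ∘ line) = fun t => fderiv ℝ g (line t) v := funext fun t =>
    ((hg.differentiable two_ne_zero (line t)).hasFDerivAt.comp_hasDerivAt t (hline t)).deriv
  have hderiv2 :
      HasDerivAt (fun t => fderiv ℝ g (line t) v) (fderiv ℝ (fderiv ℝ g) x v v) 0 := by
    have hD : HasFDerivAt (fderiv ℝ g) (fderiv ℝ (fderiv ℝ g) x) (line 0) := by
      rw [hline0]
      exact ((hg.fderiv_right (m := 1) le_rfl).differentiable one_ne_zero x).hasFDerivAt
    exact (ContinuousLinearMap.apply ℝ ℝ v).hasFDerivAt.comp_hasDerivAt 0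
      (hD.comp_hasDerivAt 0 (hline 0))
  have hmax : IsLocalMax (g ∘ line) 0 :=
    (hline0 ▸ h).comp_continuous ((hline 0).continuousAt)
  rw [← hderiv2.deriv, ← hderiv]
  exact hmax.deriv_deriv_nonpos (hg.continuous.continuousAt.comp (hline 0).continuousAt)

theorem norm_iteratedFDeriv_iteratedFDeriv {E F : Type*} [NormedAddCommGroup E]
    [NormedSpace ℝ E] [NormedAddCommGroup F] [NormedSpace ℝ F] (u : E → F) (x : E) (l j : ℕ) :
    ‖iteratedFDeriv ℝ l (iteratedFDeriv ℝ j u) x‖ = ‖iteratedFDeriv ℝ (l + j) u x‖ := by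
  induction j generalizing l with
  | zero =>
    exact LinearIsometryEquiv.norm_iteratedFDeriv_comp_left (𝕜 := ℝ)
      (continuousMultilinearCurryFin0 ℝ E F).symm u x l
  | succ j ih =>
    have hcurry := LinearIsometryEquiv.norm_iteratedFDeriv_comp_left (𝕜 := ℝ)
      (continuousMultilinearCurryLeftEquiv ℝ (fun _ : Fin (j + 1) => E) F).symm
      (fderiv ℝ (iteratedFDeriv ℝ j u)) x l
    have hstep : ‖iteratedFDeriv ℝ l (fderiv ℝ (iteratedFDeriv ℝ j u)) x‖ =
        ‖iteratedFDeriv ℝ (l + (j + 1)) u x‖ := by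
      rw [norm_iteratedFDeriv_fderiv, ih, add_right_comm, add_assoc]
    exact hcurry.trans hstep

theorem tendsto_cocompact_zero_of_norm_le_mul_inv {E F : Type*} [NormedAddCommGroup E]
    [ProperSpace E] [NormedAddCommGroup F] {u : E → F} {C : ℝ}
    (hu : ∀ y, ‖u y‖ ≤ C * (1 + ‖y‖)⁻¹) : Tendsto u (cocompact E) (𝓝 0) := by
  refine squeeze_zero_norm hu ?_
  simpa using ((tendsto_atTop_add_const_left _ 1 tendsto_norm_cocompact_atTop).inv_tendsto_atTop
    |>.const_mul C)

def traceCLM (n : ℕ) : (Euc n [×2]→L[ℝ] ℝ) →L[ℝ] ℝ :=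
  ∑ i : Fin n, ContinuousMultilinearMap.apply ℝ (fun _ => Euc n) ℝ
    ![EuclideanSpace.single i 1, EuclideanSpace.single i 1]

theorem lap_eq_neg_traceCLM_comp (n : ℕ) (g : Euc n → ℝ) :
    lap n g = -(traceCLM n ∘ iteratedFDeriv ℝ 2 g) := by
  funext x
  simp [lap, traceCLM, sum_apply]

section

variable {n m : ℕ} {g : Euc n → ℝ}

theorem IsLocalMax.lap_nonneg {x : Euc n} (h : IsLocalMax g x)
    (hg : ContDiff ℝ 2 g) : 0 ≤ lap n g x := by
  rw [lap, neg_nonneg]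
  refine Finset.sum_nonpos fun i _ => ?_
  rw [iteratedFDeriv_two_apply]
  simpa using h.fderiv_fderiv_apply_self_nonpos hg (EuclideanSpace.single i 1)

theorem lap_neg (x : Euc n) : lap n (-g) x = -lap n g x := by
  simp [lap, iteratedFDeriv_neg_apply]

theorem nonpos_of_lap_add_const_mul_nonpos {α : ℝ} (hα : 0 < α)
    (hg : ContDiff ℝ 2 g) (hsub : ∀ x, lap n g x + α * g x ≤ 0)
    (hlim : Tendsto g (cocompact (Euc n)) (𝓝 0)) (y : Euc n) : g y ≤ 0 := by
  by_contra! hy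
  obtain ⟨x, hx⟩ := hg.continuous.exists_forall_ge' y (hlim.eventually (eventually_le_nhds hy))
  have hmax : IsLocalMax g x := Eventually.of_forall hx
  nlinarith [hmax.lap_nonneg hg, hsub x, hx y]

theorem eq_zero_of_lap_add_const_mul_eq_zero {α : ℝ} (hα : 0 < α)
    (hg : ContDiff ℝ 2 g) (hsol : ∀ x, lap n g x + α * g x = 0)
    (hlim : Tendsto g (cocompact (Euc n)) (𝓝 0)) : g = 0 := by
  funext y
  refine le_antisymm (nonpos_of_lap_add_const_mul_nonpos hα hg (fun x => (hsol x).le) hlim y) ?_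
  have hneg := nonpos_of_lap_add_const_mul_nonpos (g := -g) hα hg.neg
    (fun x => by rw [lap_neg, Pi.neg_apply]; linarith [hsol x]) (neg_zero (G := ℝ) ▸ hlim.neg) y
  simpa using hneg

theorem ContDiff.lap (hg : ContDiff ℝ (m + 2 : ℕ) g) : ContDiff ℝ m (lap n g) := by
  rw [lap_eq_neg_traceCLM_comp]
  exact ((traceCLM n).contDiff.comp (hg.iteratedFDeriv_right (by norm_cast))).neg

theorem tendsto_iteratedFDeriv_lap {L : Filter (Euc n)} {l : ℕ} (hg : ContDiff ℝ (m + 2 : ℕ) g)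
    (hl : l ≤ m) (h : Tendsto (iteratedFDeriv ℝ (l + 2) g) L (𝓝 0)) :
    Tendsto (iteratedFDeriv ℝ l (lap n g)) L (𝓝 0) := by
  rw [lap_eq_neg_traceCLM_comp, iteratedFDeriv_neg, ← neg_zero]
  refine Tendsto.neg (squeeze_zero_norm (fun y => ?_)
    (by simpa using h.norm.const_mul ‖traceCLM n‖))
  rw [(traceCLM n).iteratedFDeriv_comp_left
    (hg.iteratedFDeriv_right (m := m) (by norm_cast)).contDiffAt (by exact_mod_cast hl)]
  refine ((traceCLM n).norm_compContinuousMultilinearMap_le _).trans_eq ?_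
  rw [norm_iteratedFDeriv_iteratedFDeriv]

theorem tendsto_iteratedFDeriv_lap_add_const_mul {α : ℝ} {L : Filter (Euc n)}
    (hg : ContDiff ℝ (m + 2 : ℕ) g) (h : ∀ l ≤ m + 2, Tendsto (iteratedFDeriv ℝ l g) L (𝓝 0))
    {l : ℕ} (hl : l ≤ m) :
    Tendsto (iteratedFDeriv ℝ l (fun x => lap n g x + α * g x)) L (𝓝 0) := by
  have hlap : ContDiff ℝ l (lap n g) := hg.lap.of_le (by exact_mod_cast hl)
  have hg' : ContDiff ℝ l g := hg.of_le (by norm_cast; omega)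
  have hsplit : iteratedFDeriv ℝ l (fun x => lap n g x + α * g x) =
      fun y => iteratedFDeriv ℝ l (lap n g) y + α • iteratedFDeriv ℝ l g y := by
    funext y
    exact (fun_iteratedFDeriv_add_apply hlap.contDiffAt (hg'.const_smul α).contDiffAt).trans
      (congrArg _ (iteratedFDeriv_const_smul_apply' hg'.contDiffAt))
  rw [hsplit]
  simpa using (tendsto_iteratedFDeriv_lap hg hl (h _ (by omega))).add
    ((h l (by omega)).const_smul α)

theorem eq_zero_of_lapPow_eq_zero {α : ℝ} (hα : 0 < α) (k : ℕ) {f : Euc n → ℝ}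
    (hf : ContDiff ℝ (2 * k : ℕ) f)
    (hlim : ∀ l ≤ 2 * k, Tendsto (iteratedFDeriv ℝ l f) (cocompact (Euc n)) (𝓝 0))
    (hsol : ∀ y, lapPow n α k f y = 0) : f = 0 := by
  induction k generalizing f with
  | zero => exact funext hsol
  | succ k ih =>
    rw [show 2 * (k + 1) = 2 * k + 2 by ring] at hf hlim
    have hstep : (fun x => lap n f x + α * f x) = 0 :=
      ih (hf.lap.add (contDiff_const.mul (hf.of_le (by norm_cast; omega))))
        (fun l hl => tendsto_iteratedFDeriv_lap_add_const_mul hf hlim hl) hsol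
    refine eq_zero_of_lap_add_const_mul_eq_zero hα (hf.of_le (by norm_cast; omega))
      (fun x => congrFun hstep x) ?_
    have hlim0 := hlim 0 (by omega)
    rw [tendsto_zero_iff_norm_tendsto_zero] at hlim0 ⊢
    simpa only [norm_iteratedFDeriv_zero] using hlim0

end

theorem statement15_general (n k : ℕ)
    (f : Euc n → ℝ) (hf : ContDiff ℝ (2 * k : ℕ) f)
    (heq : ∀ y : Euc n, lapPow n 1 k f y = 0)
    (hdecay : ∀ p : ℝ, 1 ≤ p → ∃ C > 0, ∀ l ≤ 2 * k, ∀ y : Euc n,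
      ‖iteratedFDeriv ℝ l f y‖ ≤ C * (1 + ‖y‖) ^ (-p)) :
    ∀ y : Euc n, f y = 0 := by
  obtain ⟨C, -, hC⟩ := hdecay 1 le_rfl
  have hlim : ∀ l ≤ 2 * k, Tendsto (iteratedFDeriv ℝ l f) (cocompact (Euc n)) (𝓝 0) :=
    fun l hl => tendsto_cocompact_zero_of_norm_le_mul_inv fun y => by
      simpa only [rpow_neg_one] using hC l hl y
  exact congrFun (eq_zero_of_lapPow_eq_zero one_pos k hf hlim heq)

/-- Liouville-type vanishing for globally defined solutions of
`(Δ+1)^k f = 0` with fast decay of all derivatives up to order `2k`. -/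
theorem statement15 (n k : ℕ) (hk : 1 ≤ k) (hn : 2 * k < n)
    (f : Euc n → ℝ) (hf : ContDiff ℝ (2 * k : ℕ) f)
    (heq : ∀ y : Euc n, lapPow n 1 k f y = 0)
    (hdecay : ∀ p : ℝ, 1 ≤ p → ∃ C > 0, ∀ l ≤ 2 * k, ∀ y : Euc n,
      ‖iteratedFDeriv ℝ l f y‖ ≤ C * (1 + ‖y‖) ^ (-p)) :
    ∀ y : Euc n, f y = 0 :=
  statement15_general n k f hf heq hdecay
end
end
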